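/- arXiv:1604.08714 — 4 statements merged into one kernel-verified Lean document; each statement's English description precedes it below -/
import Mathlib

section
/- Consider the iteration W_i^{(r+1)} = U_i^{(r+1)}/‖U_i^{(r+1)}‖_1 where U_i^{(r+1)} = W_i^{(r)} ∘ ∏_{j} (W_j^{(r)})^{ρ_{ij}} (componentwise product and powers), started at W^{(0)} = A with strictly positive entries and rows summing to 1. Then the r-th iterate is W_i^{(r)} = exp(w_i^{(r)})/‖exp(w_i^{(r)})‖_1 where the matrix w^{(r)} = (I_n + P)^r log A, with P = (ρ_{ij}) and exp, log applied componentwise. -/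
open Matrix

/-- Closed form of the multiplicative filtering iterates (case ε = 0):
`W_i^{(r)} = exp(w_i^{(r)}) / ‖exp(w_i^{(r)})‖₁` with `w^{(r)} = (I + P)^r log A`. -/
theorem stmt_4 {n K : ℕ} (A : Matrix (Fin n) (Fin K) ℝ)
    (hApos : ∀ i k, 0 < A i k) (hArow : ∀ i, ∑ k, A i k = 1)
    (P : Matrix (Fin n) (Fin n) ℝ) (hsym : P.IsSymm)
    (hnonneg : ∀ i j, 0 ≤ P i j) (hrowP : ∀ i, ∑ j, P i j = 1)
    (W : ℕ → Matrix (Fin n) (Fin K) ℝ)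
    (hW0 : W 0 = A)
    (hWiter : ∀ r i k,
      W (r + 1) i k =
        (W r i k * ∏ j, (W r j k) ^ (P i j)) /
          (∑ k', W r i k' * ∏ j, (W r j k') ^ (P i j))) :
    ∀ r i k,
      W r i k =
        Real.exp ((((1 + P) ^ r : Matrix (Fin n) (Fin n) ℝ) *
            (Matrix.of fun i' k' => Real.log (A i' k') : Matrix (Fin n) (Fin K) ℝ)) i k) /
          ∑ k', Real.exp ((((1 + P) ^ r : Matrix (Fin n) (Fin n) ℝ) *
            (Matrix.of fun i' k' => Real.log (A i' k') : Matrix (Fin n) (Fin K) ℝ)) i k') := by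
  set L : Matrix (Fin n) (Fin K) ℝ := Matrix.of fun i' k' => Real.log (A i' k') with hL
  intro r
  induction r with
  | zero =>
    intro i k
    have h1 : ∀ k', (((1 + P) ^ 0 : Matrix (Fin n) (Fin n) ℝ) * L) i k' = Real.log (A i k') := by
      intro k'
      simp [hL]
    simp only [h1]
    have h2 : ∀ k', Real.exp (Real.log (A i k')) = A i k' := fun k' => Real.exp_log (hApos i k')
    simp only [h2, hArow i, hW0, div_one]
  | succ r ih =>
    intro i k
    -- notation
    set w : Fin n → Fin K → ℝ := fun j k' => (((1 + P) ^ r : Matrix (Fin n) (Fin n) ℝ) * L) j k' with hwdef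
    have hw1 : ∀ k', (((1 + P) ^ (r + 1) : Matrix (Fin n) (Fin n) ℝ) * L) i k'
        = w i k' + ∑ j, P i j * w j k' := by
      intro k'
      rw [pow_succ', Matrix.mul_assoc, Matrix.add_mul, Matrix.one_mul, Matrix.add_apply]
      simp only [hwdef, Matrix.mul_apply]
    set S : Fin n → ℝ := fun j => ∑ k', Real.exp (w j k') with hSdef
    have hSpos : ∀ j, 0 < S j := fun j =>
      Finset.sum_pos (fun k' _ => Real.exp_pos _) ⟨k, Finset.mem_univ k⟩
    have hWr : ∀ j k', W r j k' = Real.exp (w j k') / S j := fun j k' => ih j k'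
    set v : Fin K → ℝ := fun k' => w i k' + ∑ j, P i j * w j k' with hvdef
    set C : ℝ := S i * ∏ j, (S j) ^ (P i j) with hCdef
    have hCpos : 0 < C := by
      apply mul_pos (hSpos i)
      exact Finset.prod_pos fun j _ => Real.rpow_pos_of_pos (hSpos j) _
    have hN : ∀ k', W r i k' * ∏ j, (W r j k') ^ (P i j) = Real.exp (v k') / C := by
      intro k'
      have hprod : (∏ j, (W r j k') ^ (P i j))
          = Real.exp (∑ j, P i j * w j k') / ∏ j, (S j) ^ (P i j) := by
        have : ∀ j, (W r j k') ^ (P i j)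
            = Real.exp (P i j * w j k') / (S j) ^ (P i j) := by
          intro j
          rw [hWr, Real.div_rpow (Real.exp_pos _).le (hSpos j).le, mul_comm,
            ← Real.exp_mul]
        rw [Finset.prod_congr rfl (fun j _ => this j), Finset.prod_div_distrib,
          ← Real.exp_sum]
      rw [hWr, hprod, div_mul_div_comm, ← Real.exp_add, hvdef, hCdef]
    have hsum : (∑ k', W r i k' * ∏ j, (W r j k') ^ (P i j))
        = (∑ k', Real.exp (v k')) / C := by
      rw [Finset.sum_congr rfl (fun k' _ => hN k'), ← Finset.sum_div]
    have hvsum : 0 < ∑ k', Real.exp (v k') :=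
      Finset.sum_pos (fun k' _ => Real.exp_pos _) ⟨k, Finset.mem_univ k⟩
    rw [hWiter, hN, hsum, div_div_div_comm, div_self (ne_of_gt hCpos), div_one]
    simp only [hw1, hvdef]
end

section
/- With the multiplicative filtering iteration U_i^{(r+1)} = W_i^{(r)} ∘ ∏_j (W_j^{(r)})^{ρ_{ij}}, W_i^{(r+1)} = U_i^{(r+1)}/‖U_i^{(r+1)}‖_1 started at a positive matrix A with rows in the probability simplex and P = (ρ_{ij}) symmetric stochastic, each sequence {W_i^{(r)}}_r converges in R^K as r → ∞. -/
/-!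
Writing `W⁽ʳ⁾ = softmax(Y⁽ʳ⁾)` row by row, the iteration becomes linear in the logarithms:
`Y⁽ʳ⁺¹⁾ = (1 + P) Y⁽ʳ⁾`, so `Y⁽ʳ⁾ = (1 + P)ʳ log A`. Since `P` is symmetric stochastic,
`1 + P` is positive semidefinite, hence each difference `Y⁽ʳ⁾ᵢₖ' - Y⁽ʳ⁾ᵢₖ` is an exponential sum
`∑ₜ cₜ μₜʳ` with `μₜ ≥ 0`. Such a sum converges or tends to `±∞`, according to the largest base
with a nonzero coefficient, so every ratio `W⁽ʳ⁾ᵢₖ / W⁽ʳ⁾ᵢₖ'` has a limit in `[0, ∞]`, and so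
does the row `W⁽ʳ⁾ᵢ`.
-/

open Matrix Filter Topology Real

def HasExtendedLimit (u : ℕ → ℝ) : Prop :=
  (∃ l, Tendsto u atTop (𝓝 l)) ∨ Tendsto u atTop atTop ∨ Tendsto u atTop atBot

theorem tendsto_sum_mul_pow_of_mem_Icc {ι : Type*} (s : Finset ι) (c μ : ι → ℝ)
    (hμ : ∀ t ∈ s, c t ≠ 0 → μ t ∈ Set.Icc 0 1) :
    Tendsto (fun r : ℕ => ∑ t ∈ s, c t * μ t ^ r) atTop (𝓝 (∑ t ∈ s with μ t = 1, c t)) := by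
  rw [Finset.sum_filter]
  refine tendsto_finsetSum _ fun t ht => ?_
  by_cases hc : c t = 0
  · simp [hc]
  obtain ⟨h0, h1⟩ := hμ t ht hc
  split_ifs with h
  · simp [h]
  · simpa using (tendsto_pow_atTop_nhds_zero_of_lt_one h0 (h1.lt_of_ne h)).const_mul (c t)

theorem Finset.hasExtendedLimit_sum_mul_pow (s : Finset ℝ) (c : ℝ → ℝ) (hs : ∀ x ∈ s, 0 ≤ x) :
    HasExtendedLimit fun r => ∑ x ∈ s, c x * x ^ r := by
  by_cases hbig : ∃ x ∈ s, c x ≠ 0 ∧ 1 < x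
  swap
  · push Not at hbig
    exact .inl ⟨_, tendsto_sum_mul_pow_of_mem_Icc s c id fun x hx hc => ⟨hs x hx, hbig x hx hc⟩⟩
  -- The largest base `Λ > 1` with a nonzero coefficient dominates the sum.
  set t := s.filter fun x => c x ≠ 0 ∧ 1 < x
  have ht : t.Nonempty := by simpa [t, Finset.Nonempty] using hbig
  obtain ⟨hΛs, hcΛ, hΛ1⟩ : t.max' ht ∈ s ∧ c (t.max' ht) ≠ 0 ∧ 1 < t.max' ht := by
    simpa [t] using t.max'_mem ht
  set Λ := t.max' ht
  have hΛ0 : 0 < Λ := one_pos.trans hΛ1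
  have hratio : Tendsto (fun r : ℕ => ∑ x ∈ s, c x * (x / Λ) ^ r) atTop (𝓝 (c Λ)) := by
    convert tendsto_sum_mul_pow_of_mem_Icc s c (· / Λ) fun x hx hc => ⟨?_, ?_⟩ using 2
    · simp [div_eq_one_iff_eq hΛ0.ne', Finset.filter_eq', hΛs]
    · exact div_nonneg (hs x hx) hΛ0.le
    · rw [div_le_one hΛ0]
      rcases le_or_gt x 1 with h | h
      · exact h.trans hΛ1.le
      · exact t.le_max' x (by simp [t, hx, hc, h])
  have hu (r : ℕ) : ∑ x ∈ s, c x * x ^ r = (∑ x ∈ s, c x * (x / Λ) ^ r) * Λ ^ r := by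
    rw [Finset.sum_mul]
    exact Finset.sum_congr rfl fun x _ => by
      rw [div_pow, mul_assoc, div_mul_cancel₀ _ (pow_ne_zero r hΛ0.ne')]
  simp only [hu]
  have hpow := tendsto_pow_atTop_atTop_of_one_lt hΛ1
  rcases hcΛ.lt_or_gt with hneg | hpos
  · exact .inr (.inr (hratio.neg_mul_atTop hneg hpow))
  · exact .inr (.inl (hratio.pos_mul_atTop hpos hpow))

theorem hasExtendedLimit_sum_mul_pow {ι : Type*} [Fintype ι] (c μ : ι → ℝ) (hμ : ∀ t, 0 ≤ μ t) :
    HasExtendedLimit fun r => ∑ t, c t * μ t ^ r := by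
  classical
  have hgroup (r : ℕ) : ∑ t, c t * μ t ^ r =
      ∑ x ∈ Finset.univ.image μ, (∑ t with μ t = x, c t) * x ^ r := by
    rw [← Finset.sum_fiberwise_of_maps_to fun t _ => Finset.mem_image_of_mem μ (Finset.mem_univ t)]
    refine Finset.sum_congr rfl fun x _ => ?_
    rw [Finset.sum_mul]
    exact Finset.sum_congr rfl fun t ht => by rw [(Finset.mem_filter.mp ht).2]
  simp only [hgroup]
  exact (Finset.univ.image μ).hasExtendedLimit_sum_mul_pow _ (by simpa using hμ)

theorem HasExtendedLimit.exp {u : ℕ → ℝ} (hu : HasExtendedLimit u) :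
    (∃ l, Tendsto (fun r => exp (u r)) atTop (𝓝 l)) ∨
      Tendsto (fun r => exp (u r)) atTop atTop := by
  rcases hu with ⟨l, hl⟩ | h | h
  · exact .inl ⟨_, (continuous_exp.tendsto l).comp hl⟩
  · exact .inr (tendsto_exp_atTop.comp h)
  · exact .inl ⟨0, tendsto_exp_atBot.comp h⟩

theorem exists_tendsto_exp_div_sum_exp {ι : Type*} [Fintype ι] (y : ℕ → ι → ℝ) (k : ι)
    (hy : ∀ k', HasExtendedLimit fun r => y r k' - y r k) :
    ∃ l, Tendsto (fun r => exp (y r k) / ∑ k', exp (y r k')) atTop (𝓝 l) := by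
  set S := fun r => ∑ k', exp (y r k' - y r k)
  have hS (r : ℕ) : exp (y r k) / ∑ k', exp (y r k') = (S r)⁻¹ := by
    simp only [S, exp_sub, ← Finset.sum_div, inv_div]
  have hS1 (r : ℕ) : 1 ≤ S r := by
    simpa using Finset.single_le_sum (fun k' _ => (exp_pos (y r k' - y r k)).le)
      (Finset.mem_univ k)
  simp only [hS]
  by_cases hconv : ∀ k', ∃ l, Tendsto (fun r => exp (y r k' - y r k)) atTop (𝓝 l)
  · choose l hl using hconv
    have hlim := tendsto_finsetSum Finset.univ fun k' _ => hl k'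
    exact ⟨_, hlim.inv₀ (one_pos.trans_le (ge_of_tendsto' hlim hS1)).ne'⟩
  · push Not at hconv
    obtain ⟨k', hk'⟩ := hconv
    have hbig := (hy k').exp.resolve_left fun ⟨l, hl⟩ => hk' l hl
    refine ⟨0, (tendsto_atTop_mono (fun r => ?_) hbig).inv_tendsto_atTop⟩
    exact Finset.single_le_sum (f := fun k' => exp (y r k' - y r k))
      (fun _ _ => (exp_pos _).le) (Finset.mem_univ k')

theorem Matrix.IsHermitian.exists_pow_mulVec_apply_eq_sum {n : Type*} [Fintype n]
    [DecidableEq n] {M : Matrix n n ℝ} (hM : M.IsHermitian) (v : n → ℝ) (i : n) :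
    ∃ c : n → ℝ, ∀ r : ℕ, (M ^ r *ᵥ v) i = ∑ t, c t * hM.eigenvalues t ^ r := by
  set U : Matrix n n ℝ := (hM.eigenvectorUnitary : Matrix n n ℝ)
  have hpow (r : ℕ) : M ^ r = U * diagonal (hM.eigenvalues ^ r) * star U := by
    have := congrArg (· ^ r) hM.spectral_theorem
    rw [← map_pow, diagonal_pow] at this
    simpa using this
  refine ⟨fun t => U i t * (star U *ᵥ v) t, fun r => ?_⟩
  rw [hpow, ← mulVec_mulVec, ← mulVec_mulVec, mulVec, dotProduct]
  simp only [mulVec_diagonal, Pi.pow_apply]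
  exact Finset.sum_congr rfl fun t _ => by ring

theorem Matrix.posSemidef_one_add_of_rowSum_le_one {n : Type*} [Fintype n] [DecidableEq n]
    {P : Matrix n n ℝ} (hsym : P.IsSymm) (hnonneg : ∀ i j, 0 ≤ P i j)
    (hrow : ∀ i, ∑ j, P i j ≤ 1) : (1 + P).PosSemidef := by
  refine .of_dotProduct_mulVec_nonneg
    (isHermitian_one.add (isHermitian_iff_isSymm.mpr hsym)) fun x => ?_
  have hform : star x ⬝ᵥ ((1 + P) *ᵥ x) = ∑ i, x i ^ 2 + ∑ i, ∑ j, P i j * x i * x j := by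
    simp only [star_trivial, add_mulVec, one_mulVec, dotProduct_add]
    simp only [dotProduct, mulVec, Finset.mul_sum, sq]
    exact congrArg _ (Finset.sum_congr rfl fun i _ => Finset.sum_congr rfl fun j _ => by ring)
  have hswap : ∑ i, ∑ j, P i j * x j ^ 2 = ∑ i, ∑ j, P i j * x i ^ 2 := by
    rw [Finset.sum_comm]
    exact Finset.sum_congr rfl fun i _ => Finset.sum_congr rfl fun j _ => by rw [hsym.apply]
  -- `2 xᵀ(1 + P)x` dominates `∑ᵢⱼ Pᵢⱼ (xᵢ + xⱼ)²`, which is nonnegative.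
  have hsq : ∑ i, ∑ j, P i j * (x i + x j) ^ 2 =
      2 * ∑ i, (∑ j, P i j) * x i ^ 2 + 2 * ∑ i, ∑ j, P i j * x i * x j := by
    have (i j : n) : P i j * (x i + x j) ^ 2 =
        P i j * x i ^ 2 + P i j * x j ^ 2 + 2 * (P i j * x i * x j) := by ring
    simp only [this, Finset.sum_add_distrib, ← Finset.mul_sum, Finset.sum_mul, hswap]
    ring
  have hrow' : ∑ i, (∑ j, P i j) * x i ^ 2 ≤ ∑ i, x i ^ 2 :=
    Finset.sum_le_sum fun i _ => mul_le_of_le_one_left (sq_nonneg _) (hrow i)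
  have hnn : 0 ≤ ∑ i, ∑ j, P i j * (x i + x j) ^ 2 :=
    Finset.sum_nonneg fun i _ => Finset.sum_nonneg fun j _ =>
      mul_nonneg (hnonneg i j) (sq_nonneg _)
  rw [hform]
  linarith

theorem Matrix.PosSemidef.hasExtendedLimit_pow_mulVec_apply {n : Type*} [Fintype n]
    [DecidableEq n] {M : Matrix n n ℝ} (hM : M.PosSemidef) (v : n → ℝ) (i : n) :
    HasExtendedLimit fun r => (M ^ r *ᵥ v) i := by
  obtain ⟨c, hc⟩ := hM.1.exists_pow_mulVec_apply_eq_sum v i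
  simpa only [hc] using hasExtendedLimit_sum_mul_pow c _ hM.eigenvalues_nonneg

section Softmax

variable {m K : Type*} [Fintype K]

noncomputable def rowSoftmax (Y : Matrix m K ℝ) : Matrix m K ℝ :=
  of fun i k => exp (Y i k) / ∑ k', exp (Y i k')

theorem rowSoftmax_apply (Y : Matrix m K ℝ) (i : m) (k : K) :
    rowSoftmax Y i k = exp (Y i k) / ∑ k', exp (Y i k') := rfl

theorem rowSoftmax_map_log {A : Matrix m K ℝ} (hpos : ∀ i k, 0 < A i k)
    (hrow : ∀ i, ∑ k, A i k = 1) : rowSoftmax (A.map Real.log) = A := by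
  ext i k
  simp [rowSoftmax_apply, exp_log (hpos _ _), hrow]

variable [Fintype m]

noncomputable def filterStep (P : Matrix m m ℝ) (W : Matrix m K ℝ) : Matrix m K ℝ :=
  of fun i k => (W i k * ∏ j, W j k ^ P i j) / ∑ k', W i k' * ∏ j, W j k' ^ P i j

theorem filterStep_rowSoftmax [DecidableEq m] (P : Matrix m m ℝ) (Y : Matrix m K ℝ) :
    filterStep P (rowSoftmax Y) = rowSoftmax ((1 + P) * Y) := by
  ext i k
  rw [Matrix.add_mul, Matrix.one_mul]
  set Z := fun j => ∑ k', exp (Y j k')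
  have hZ (j : m) : 0 < Z j := Finset.sum_pos (fun _ _ => exp_pos _) ⟨k, Finset.mem_univ k⟩
  have hc : (Z i * ∏ j, Z j ^ P i j)⁻¹ ≠ 0 :=
    inv_ne_zero (mul_pos (hZ i) (Finset.prod_pos fun j _ => rpow_pos_of_pos (hZ j) _)).ne'
  have hunnorm (k' : K) : rowSoftmax Y i k' * ∏ j, rowSoftmax Y j k' ^ P i j =
      exp ((Y + P * Y) i k') * (Z i * ∏ j, Z j ^ P i j)⁻¹ := by
    have hrpow (j : m) : rowSoftmax Y j k' ^ P i j = exp (P i j * Y j k') / Z j ^ P i j := by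
      rw [rowSoftmax_apply, div_rpow (exp_pos _).le (hZ j).le, ← exp_mul, mul_comm]
    simp only [hrpow, Finset.prod_div_distrib, ← exp_sum]
    rw [Matrix.add_apply, mul_apply, exp_add, rowSoftmax_apply]
    field_simp
    ring
  simp only [filterStep, of_apply, hunnorm, ← Finset.sum_mul, mul_div_mul_right _ _ hc]
  rfl

end Softmax

/-- The multiplicative filtering iterates (ε = 0) converge: for every `i`, the
sequence of rows `W_i^{(r)}` converges in `ℝ^K` as `r → ∞`. -/
theorem stmt_5 {n K : ℕ} (A : Matrix (Fin n) (Fin K) ℝ)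
    (hApos : ∀ i k, 0 < A i k) (hArow : ∀ i, ∑ k, A i k = 1)
    (P : Matrix (Fin n) (Fin n) ℝ) (hsym : P.IsSymm)
    (hnonneg : ∀ i j, 0 ≤ P i j) (hrowP : ∀ i, ∑ j, P i j = 1)
    (W : ℕ → Matrix (Fin n) (Fin K) ℝ)
    (hW0 : W 0 = A)
    (hWiter : ∀ r i k,
      W (r + 1) i k =
        (W r i k * ∏ j, (W r j k) ^ (P i j)) /
          (∑ k', W r i k' * ∏ j, (W r j k') ^ (P i j))) :
    ∀ i, ∃ L : Fin K → ℝ,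
      Filter.Tendsto (fun r => W r i) Filter.atTop (nhds L) := by
  have hclosed (r : ℕ) : W r = rowSoftmax ((1 + P) ^ r * A.map Real.log) := by
    induction r with
    | zero => rw [hW0, pow_zero, Matrix.one_mul, rowSoftmax_map_log hApos hArow]
    | succ r ih =>
      rw [pow_succ', Matrix.mul_assoc, ← filterStep_rowSoftmax, ← ih]
      ext i k
      exact hWiter r i k
  have hpsd := Matrix.posSemidef_one_add_of_rowSum_le_one hsym hnonneg fun i => (hrowP i).le
  intro i
  have hentry (k : Fin K) : ∃ l, Tendsto (fun r => W r i k) atTop (𝓝 l) := by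
    simp only [hclosed, rowSoftmax_apply]
    refine exists_tendsto_exp_div_sum_exp _ k fun k' => ?_
    simpa only [Matrix.mul_apply, Matrix.map_apply, Matrix.mulVec, dotProduct,
      ← Finset.sum_sub_distrib, ← mul_sub]
      using hpsd.hasExtendedLimit_pow_mulVec_apply (fun j => log (A j k') - log (A j k)) i
  choose L hL using hentry
  exact ⟨L, tendsto_pi_nhds.mpr hL⟩
end

section
/- Let 0 < y_1 ≤ y_2 ≤ ... ≤ y_K and 0 < ε < 1/K. Let m be an index such that y_m τ_m ≤ ε and y_{m+1} τ_m > ε, where τ_m := (1 − mε)/(‖y‖_1 − Σ_{k=1}^m y_k). Then the minimizer of KL(x,y) = Σ_k x_k log(x_k/y_k) over the ε-probability simplex Δ_{K,ε} = {x ∈ R^K : Σ_k x_k = 1, x_k ≥ ε for all k} is x* = (ε,...,ε, τ_m y_{m+1}, ..., τ_m y_K), with the first m components equal to ε. -/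
open Real Finset

lemma kl_pointwise {a b c : ℝ} (ha : 0 < a) (hb : 0 < b) (hc : 0 < c) :
    a * Real.log (a / c) + (Real.log (a / c) + 1) * (b - a) ≤ b * Real.log (b / c) := by
  have h1 : Real.log (a / b) ≤ a / b - 1 := Real.log_le_sub_one_of_pos (by positivity)
  have hlog : Real.log (b / c) = Real.log (b / a) + Real.log (a / c) := by
    rw [Real.log_div hb.ne' hc.ne', Real.log_div hb.ne' ha.ne', Real.log_div ha.ne' hc.ne']
    ring
  have hba : Real.log (b / a) = - Real.log (a / b) := by
    rw [← Real.log_inv]; congr 1; field_simp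
  have hdiv : b * (a / b) = a := mul_div_cancel₀ a hb.ne'
  have h2 : b - a ≤ b * Real.log (b / a) := by
    rw [hba]
    nlinarith [mul_le_mul_of_nonneg_left h1 hb.le]
  rw [hlog]; nlinarith

lemma card_filter_val_lt (K m : ℕ) (hm : m ≤ K) :
    (Finset.univ.filter fun k : Fin K => k.val < m).card = m := by
  have : (univ.filter fun k : Fin K => k.val < m) =
      (univ : Finset (Fin m)).map (Fin.castLEEmb hm) := by
    ext k
    simp only [mem_filter, mem_univ, true_and, mem_map]
    constructor
    · intro hk; exact ⟨⟨k, hk⟩, by simp [Fin.castLEEmb, Fin.ext_iff]⟩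
    · rintro ⟨j, -, rfl⟩; simp
  rw [this, card_map, card_univ, Fintype.card_fin]

/-- KL projection onto the ε-probability simplex `Δ_{K,ε}`: with `y` sorted
increasingly and the threshold index `m` satisfying `τ_m y_m ≤ ε < τ_m y_{m+1}`,
the minimizer of `KL(·, y)` over `Δ_{K,ε}` is
`(ε, …, ε, τ_m y_{m+1}, …, τ_m y_K)`. -/
theorem stmt_7 {K : ℕ} (y : Fin K → ℝ)
    (hypos : ∀ k, 0 < y k)
    (hmono : ∀ k l : Fin K, k ≤ l → y k ≤ y l)
    (ε : ℝ) (hε0 : 0 < ε) (hεK : ε < 1 / K)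
    (m : ℕ) (hm : m < K)
    (τ : ℝ) (hτ : τ = (1 - m * ε) / ((∑ k, y k) - ∑ k ∈ Finset.univ.filter (fun k : Fin K => k.val < m), y k))
    (hle : ∀ h0 : 0 < m, y ⟨m - 1, by omega⟩ * τ ≤ ε)
    (hgt : ε < y ⟨m, hm⟩ * τ)
    (x : Fin K → ℝ)
    (hx : x = fun k => if k.val < m then ε else τ * y k) :
    (∑ k, x k = 1 ∧ ∀ k, ε ≤ x k) ∧
      ∀ z : Fin K → ℝ, (∑ k, z k = 1) → (∀ k, ε ≤ z k) →
        ∑ k, x k * Real.log (x k / y k) ≤ ∑ k, z k * Real.log (z k / y k) := by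
  have hxS : ∀ k : Fin K, k.val < m → x k = ε := by
    intro k hk; simp [hx, hk]
  have hxT : ∀ k : Fin K, ¬ k.val < m → x k = τ * y k := by
    intro k hk; simp [hx, hk]
  have hτpos : 0 < τ := by
    have h0 := hypos ⟨m, hm⟩
    nlinarith
  -- sum decomposition
  have hsplit : (∑ k, y k) = (∑ k ∈ univ.filter (fun k : Fin K => k.val < m), y k)
      + ∑ k ∈ univ.filter (fun k : Fin K => ¬ k.val < m), y k :=
    (Finset.sum_filter_add_sum_filter_not univ _ y).symm
  have hmmem : (⟨m, hm⟩ : Fin K) ∈ univ.filter (fun k : Fin K => ¬ k.val < m) := by simp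
  have hDpos : 0 < ∑ k ∈ univ.filter (fun k : Fin K => ¬ k.val < m), y k :=
    Finset.sum_pos (fun k _ => hypos k) ⟨_, hmmem⟩
  have hτD : τ * (∑ k ∈ univ.filter (fun k : Fin K => ¬ k.val < m), y k) = 1 - m * ε := by
    rw [hτ]
    rw [show (∑ k, y k) - (∑ k ∈ univ.filter (fun k : Fin K => k.val < m), y k)
        = ∑ k ∈ univ.filter (fun k : Fin K => ¬ k.val < m), y k by rw [hsplit]; ring]
    exact div_mul_cancel₀ _ hDpos.ne'
  -- sum of x equals 1
  have hxsum : ∑ k, x k = 1 := by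
    rw [← Finset.sum_filter_add_sum_filter_not univ (fun k : Fin K => k.val < m) x]
    rw [Finset.sum_congr rfl (fun k hk => hxS k (mem_filter.mp hk).2),
        Finset.sum_congr rfl (fun k hk => hxT k (mem_filter.mp hk).2)]
    rw [Finset.sum_const, card_filter_val_lt K m hm.le, ← Finset.mul_sum, hτD]
    push_cast
    ring
  -- monotonicity consequences
  have hymin : ∀ k : Fin K, ¬ k.val < m → y ⟨m, hm⟩ ≤ y k := by
    intro k hk
    exact hmono _ _ (by simp only [Fin.le_def]; omega)
  have hymax : ∀ k : Fin K, (hk : k.val < m) → τ * y k ≤ ε := by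
    intro k hk
    have h0 : 0 < m := by omega
    have h1 : y k ≤ y ⟨m - 1, by omega⟩ := hmono _ _ (by simp only [Fin.le_def]; omega)
    have := hle h0
    nlinarith
  have hxge : ∀ k, ε ≤ x k := by
    intro k
    by_cases hk : k.val < m
    · rw [hxS k hk]
    · rw [hxT k hk]
      have := hymin k hk
      nlinarith
  refine ⟨⟨hxsum, hxge⟩, ?_⟩
  intro z hz1 hz2
  have hxpos : ∀ k, 0 < x k := fun k => lt_of_lt_of_le hε0 (hxge k)
  have hzpos : ∀ k, 0 < z k := fun k => lt_of_lt_of_le hε0 (hz2 k)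
  -- gradient term nonnegative
  have grad : 0 ≤ ∑ k, (Real.log (x k / y k) + 1) * (z k - x k) := by
    have hrw : ∀ k : Fin K, (Real.log (x k / y k) + 1) * (z k - x k)
        = (Real.log τ + 1) * (z k - x k)
          + (Real.log (x k / y k) - Real.log τ) * (z k - x k) := by
      intro k; ring
    rw [Finset.sum_congr rfl (fun k _ => hrw k), Finset.sum_add_distrib, ← Finset.mul_sum,
        Finset.sum_sub_distrib, hz1, hxsum, sub_self, mul_zero, zero_add]
    apply Finset.sum_nonneg
    intro k _
    by_cases hk : k.val < m
    · apply mul_nonneg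
      · have hτy : τ ≤ ε / y k := by
          rw [le_div_iff₀ (hypos k)]
          have := hymax k hk
          nlinarith
        have := Real.log_le_log hτpos hτy
        rw [hxS k hk]
        linarith
      · have := hz2 k
        rw [hxS k hk]
        linarith
    · have : x k / y k = τ := by
        rw [hxT k hk]
        exact mul_div_cancel_right₀ τ (hypos k).ne'
      rw [this, sub_self, zero_mul]
  have key : ∀ k : Fin K, x k * Real.log (x k / y k) + (Real.log (x k / y k) + 1) * (z k - x k)
      ≤ z k * Real.log (z k / y k) := fun k => kl_pointwise (hxpos k) (hzpos k) (hypos k)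
  calc ∑ k, x k * Real.log (x k / y k)
      ≤ ∑ k, (x k * Real.log (x k / y k) + (Real.log (x k / y k) + 1) * (z k - x k)) := by
        rw [Finset.sum_add_distrib]
        linarith
    _ ≤ ∑ k, z k * Real.log (z k / y k) := Finset.sum_le_sum (fun k _ => key k)
end

section
/- Let x be the KL-projection of y ∈ R^K_{>0} onto Δ_{K,ε} with 0 < ε < 1/K. Then x is characterized by the KKT conditions: there exist τ̃ ∈ R and p ∈ R^K_{≤0} with log(x/y) + (1+τ̃)1_K + p = 0, ⟨x,1_K⟩ = 1, x ≥ ε1_K, and ⟨x − ε1_K, p⟩ = 0; in particular x = (y ∘ q)/⟨y∘q, 1_K⟩ where q = exp(−p) ≥ 1 componentwise, and q_k = 1 whenever x_k > ε. -/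
/-!
Shifting a small mass `t > 0` from a coordinate `k` with `x k > ε` to any other coordinate `j`
keeps `x` in `Δ_{K,ε}`, so first-order optimality along this direction gives
`log (x k / y k) ≤ log (x j / y j)`. Hence every coordinate above the bound `ε` attains the
minimum `m` of `log (x / y)`, and `p := m - log (x / y)`, `τ̃ := -1 - m` satisfy the KKT
conditions; `exp (-p) = exp (-m) • x / y` then gives the normalized form of `x`.
-/

open Finset Real

theorem HasDerivAt.nonneg_of_isMinOn_Icc {g : ℝ → ℝ} {d a b : ℝ} (hab : a < b)
    (hg : HasDerivAt g d a) (hmin : IsMinOn g (Set.Icc a b) a) : 0 ≤ d := by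
  have hcone : b - a ∈ posTangentConeAt (Set.Icc a b) a :=
    mem_posTangentConeAt_of_segment_subset (by rw [add_sub_cancel, segment_eq_Icc hab.le])
  have := hmin.localize.hasFDerivWithinAt_nonneg hg.hasFDerivAt.hasFDerivWithinAt hcone
  simp only [ContinuousLinearMap.toSpanSingleton_apply, smul_eq_mul] at this
  exact nonneg_of_mul_nonneg_right this (sub_pos.2 hab)

theorem hasDerivAt_mul_log_div {a c : ℝ} (ha : a ≠ 0) (hc : c ≠ 0) :
    HasDerivAt (fun s => s * log (s / c)) (log (a / c) + 1) a := by
  refine ((hasDerivAt_id' a).mul (((hasDerivAt_id' a).div_const c).log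
    (div_ne_zero ha hc))).congr_deriv ?_
  field_simp

section Transfer

variable {ι : Type*} [DecidableEq ι]

def transfer (x : ι → ℝ) (j k : ι) (t : ℝ) : ι → ℝ := x + Pi.single j t - Pi.single k t

variable {j k : ι}

theorem transfer_apply_left (x : ι → ℝ) (hjk : j ≠ k) (t : ℝ) :
    transfer x j k t j = x j + t := by
  simp [transfer, hjk]

theorem transfer_apply_right (x : ι → ℝ) (hjk : j ≠ k) (t : ℝ) :
    transfer x j k t k = x k - t := by
  simp [transfer, hjk.symm]

theorem transfer_apply_of_ne (x : ι → ℝ) (t : ℝ) {i : ι} (hij : i ≠ j) (hik : i ≠ k) :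
    transfer x j k t i = x i := by
  simp [transfer, hij, hik]

variable [Fintype ι]

theorem sum_transfer (x : ι → ℝ) (j k : ι) (t : ℝ) : ∑ i, transfer x j k t i = ∑ i, x i := by
  simp [transfer, sum_add_distrib, sum_sub_distrib]

theorem sum_comp_transfer_sub (f : ι → ℝ → ℝ) (x : ι → ℝ) (hjk : j ≠ k) (t : ℝ) :
    ∑ i, f i (transfer x j k t i) - ∑ i, f i (x i) =
      (f j (x j + t) - f j (x j)) + (f k (x k - t) - f k (x k)) := by
  rw [← sum_sub_distrib]
  refine (sum_eq_add j k hjk (fun i _ hi => ?_) (by simp) (by simp)).trans ?_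
  · rw [transfer_apply_of_ne x t hi.1 hi.2, sub_self]
  · rw [transfer_apply_left x hjk, transfer_apply_right x hjk]

end Transfer

theorem IsMinOn.hasDerivAt_le_of_lt {ι : Type*} [Fintype ι] {f : ι → ℝ → ℝ} {f' : ι → ℝ}
    {x : ι → ℝ} {ε : ℝ} (hf : ∀ i, HasDerivAt (f i) (f' i) (x i)) (hxε : ∀ i, ε ≤ x i)
    (hmin : IsMinOn (fun z => ∑ i, f i (z i)) {z | ∑ i, z i = ∑ i, x i ∧ ∀ i, ε ≤ z i} x)
    {k : ι} (hk : ε < x k) (j : ι) : f' k ≤ f' j := by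
  classical
  rcases eq_or_ne j k with rfl | hjk
  · exact le_rfl
  set g : ℝ → ℝ := fun t => f j (x j + t) + f k (x k - t)
  have hg : HasDerivAt g (f' j - f' k) 0 := by
    have hj : HasDerivAt (fun t => f j (x j + t)) (f' j) 0 :=
      HasDerivAt.comp_const_add (x j) 0 (by simpa using hf j)
    have hk : HasDerivAt (fun t => f k (x k - t)) (-f' k) 0 :=
      HasDerivAt.comp_const_sub (x k) 0 (by simpa using hf k)
    exact (hj.add hk).congr_deriv (by ring)
  have hgmin : IsMinOn g (Set.Icc 0 (x k - ε)) 0 := by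
    rintro t ⟨ht0, htδ⟩
    have hfeas : ∀ i, ε ≤ transfer x j k t i := by
      intro i
      rcases eq_or_ne i j with rfl | hij
      · rw [transfer_apply_left x hjk]; linarith [hxε i]
      rcases eq_or_ne i k with rfl | hik
      · rw [transfer_apply_right x hjk]; linarith
      · rw [transfer_apply_of_ne x t hij hik]; exact hxε i
    have hz := hmin ⟨sum_transfer x j k t, hfeas⟩
    have := sum_comp_transfer_sub f x hjk t
    simp only [Set.mem_ofPred_eq, g, add_zero, sub_zero] at hz ⊢
    linarith
  linarith [hg.nonneg_of_isMinOn_Icc (sub_pos.2 hk) hgmin]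

theorem eq_div_sum_of_eq_mul {ι : Type*} [Fintype ι] {x w : ι → ℝ} {c : ℝ} (hc : c ≠ 0)
    (hx : ∑ i, x i = 1) (hw : ∀ i, w i = c * x i) (k : ι) : x k = w k / ∑ i, w i := by
  simp only [hw, ← mul_sum, hx, mul_one]
  field_simp

theorem stmt_19_general {K : ℕ} (y : Fin K → ℝ) (hy : ∀ k, 0 < y k)
    (ε : ℝ) (hε0 : 0 < ε)
    (x : Fin K → ℝ)
    (hxsum : ∑ k, x k = 1) (hxε : ∀ k, ε ≤ x k)
    (hmin : ∀ z : Fin K → ℝ, (∑ k, z k = 1) → (∀ k, ε ≤ z k) →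
      ∑ k, x k * Real.log (x k / y k) ≤ ∑ k, z k * Real.log (z k / y k)) :
    ∃ (τ : ℝ) (p : Fin K → ℝ),
      (∀ k, p k ≤ 0) ∧
      (∀ k, Real.log (x k / y k) + (1 + τ) + p k = 0) ∧
      (∑ k, (x k - ε) * p k = 0) ∧
      (∀ k, x k = y k * Real.exp (-(p k)) / ∑ k', y k' * Real.exp (-(p k'))) ∧
      (∀ k, 1 ≤ Real.exp (-(p k))) ∧
      (∀ k, ε < x k → Real.exp (-(p k)) = 1) := by
  have hxpos : ∀ k, 0 < x k := fun k => hε0.trans_le (hxε k)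
  set L : Fin K → ℝ := fun k => log (x k / y k)
  obtain ⟨j, -, hj⟩ := exists_min_image univ L (nonempty_of_sum_ne_zero (hxsum ▸ one_ne_zero))
  have hL_min : ∀ k, L j ≤ L k := fun k => hj k (mem_univ k)
  have hslack : ∀ k, ε < x k → L k = L j := by
    intro k hk
    have hle := IsMinOn.hasDerivAt_le_of_lt (f := fun i s => s * log (s / y i))
      (fun i => hasDerivAt_mul_log_div (hxpos i).ne' (hy i).ne') hxε
      (fun z ⟨hz1, hz2⟩ => hmin z (hz1.trans hxsum) hz2) hk j
    linarith [hL_min k]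
  have hexp : ∀ k, y k * exp (-(L j - L k)) = exp (-L j) * x k := by
    intro k
    rw [neg_sub, sub_eq_add_neg, exp_add, exp_log (div_pos (hxpos k) (hy k))]
    field_simp [(hy k).ne']
  refine ⟨-1 - L j, fun k => L j - L k, fun k => sub_nonpos.2 (hL_min k), fun k => by ring,
    sum_eq_zero fun k _ => ?_, eq_div_sum_of_eq_mul (exp_pos _).ne' hxsum hexp,
    fun k => one_le_exp (by linarith [hL_min k]), fun k hk => by simp [hslack k hk]⟩
  rcases (hxε k).eq_or_lt with h | h
  · simp [← h]
  · simp [hslack k h]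

/-- KKT characterization of the KL projection onto the ε-probability simplex:
if `x` minimizes `KL(·,y)` over `Δ_{K,ε}` (`0 < ε < 1/K`), then there exist a
multiplier `τ̃` and `p ≤ 0` with `log(x/y) + (1+τ̃)𝟙 + p = 0`, `⟨x,𝟙⟩ = 1`,
`x ≥ ε𝟙`, `⟨x − ε𝟙, p⟩ = 0`; in particular `x = (y ∘ q)/⟨y ∘ q, 𝟙⟩` with
`q = exp(−p) ≥ 1` componentwise and `q_k = 1` whenever `x_k > ε`. -/
theorem stmt_19 {K : ℕ} (y : Fin K → ℝ) (hy : ∀ k, 0 < y k)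
    (ε : ℝ) (hε0 : 0 < ε) (hεK : ε < 1 / K)
    (x : Fin K → ℝ)
    (hxsum : ∑ k, x k = 1) (hxε : ∀ k, ε ≤ x k)
    (hmin : ∀ z : Fin K → ℝ, (∑ k, z k = 1) → (∀ k, ε ≤ z k) →
      ∑ k, x k * Real.log (x k / y k) ≤ ∑ k, z k * Real.log (z k / y k)) :
    ∃ (τ : ℝ) (p : Fin K → ℝ),
      (∀ k, p k ≤ 0) ∧
      (∀ k, Real.log (x k / y k) + (1 + τ) + p k = 0) ∧
      (∑ k, (x k - ε) * p k = 0) ∧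
      (∀ k, x k = y k * Real.exp (-(p k)) / ∑ k', y k' * Real.exp (-(p k'))) ∧
      (∀ k, 1 ≤ Real.exp (-(p k))) ∧
      (∀ k, ε < x k → Real.exp (-(p k)) = 1) :=
  stmt_19_general y hy ε hε0 x hxsum hxε hmin
end
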